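/- Let μ be the real Gaussian probability measure with mean m > 0 and standard deviation s > 0, and set β = m/s. Then the unique b > 0 solving F(b) = E_f*, where E_f* = (∫_{(−∞,0)} (−x) dμ(x)) / (s·μ((−∞,0))) is the normalized expected failure deficit of μ, is b = β; that is, the severity-aware reliability index coincides with the classical reliability index β = m/s in the Gaussian case. -/

import Mathlib

open MeasureTheory Filter

/-- Standard normal density. -/
noncomputable def phi (x : ℝ) : ℝ := Real.exp (-x ^ 2 / 2) / Real.sqrt (2 * Real.pi)

/-- Standard normal cumulative distribution function. -/
noncomputable def Phi (x : ℝ) : ℝ := ∫ t in Set.Iio x, phi t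

/-- Mills-type ratio. -/
noncomputable def r (b : ℝ) : ℝ := phi b / Phi (-b)

/-- The deficit transformation `F`. -/
noncomputable def F (b : ℝ) : ℝ := phi b / Phi (-b) - b

/-!
Standardising, a Gaussian limit state `g = m + s X` with `X` standard normal has
`E[-g | g < 0] / s = E[X - β | X > β] = φ(β) / Φ(-β) - β = F(β)` for `β = m / s`.
For uniqueness, `F(b) = E[X - b | X > b]` has derivative `r (r - b) - 1 = -Var(X | X > b) < 0`,
where `r = φ(b) / Φ(-b)`, so `F` is strictly decreasing.
-/

open ProbabilityTheory

lemma phi_eq_gaussianPDFReal : phi = gaussianPDFReal 0 1 := by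
  ext x
  simp only [phi, gaussianPDFReal, NNReal.coe_one, mul_one, sub_zero, div_eq_inv_mul]

lemma phi_pos (x : ℝ) : 0 < phi x := by
  rw [phi_eq_gaussianPDFReal]
  exact gaussianPDFReal_pos _ _ _ one_ne_zero

lemma phi_neg (x : ℝ) : phi (-x) = phi x := by simp [phi]

@[fun_prop]
lemma continuous_phi : Continuous phi := by
  unfold phi
  fun_prop

lemma hasDerivAt_phi (x : ℝ) : HasDerivAt phi (-x * phi x) x := by
  have h : HasDerivAt (fun t : ℝ => -t ^ 2 / 2) (-x) x := by
    have := (hasDerivAt_pow 2 x).neg.div_const 2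
    simpa using this.congr_deriv (by ring)
  unfold phi
  exact (h.exp.div_const _).congr_deriv (by ring)

lemma pow_mul_phi_eq (n : ℕ) (x : ℝ) :
    x ^ n * phi x
      = (Real.sqrt (2 * Real.pi))⁻¹ * (x ^ (n : ℝ) * Real.exp (-(1 / 2) * x ^ 2)) := by
  simp only [phi, Real.rpow_natCast]
  ring_nf

lemma integrable_pow_mul_phi (n : ℕ) : Integrable (fun x => x ^ n * phi x) := by
  simp_rw [pow_mul_phi_eq]
  have hn : (-1 : ℝ) < n := by linarith [n.cast_nonneg (α := ℝ)]
  exact (integrable_rpow_mul_exp_neg_mul_sq (by norm_num) hn).const_mul _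

lemma integrable_phi : Integrable phi := by
  simpa using integrable_pow_mul_phi 0

lemma integrable_mul_phi : Integrable (fun x => x * phi x) := by
  simpa using integrable_pow_mul_phi 1

lemma tendsto_pow_mul_phi_atBot (n : ℕ) : Tendsto (fun x => x ^ n * phi x) atBot (nhds 0) := by
  rw [tendsto_zero_iff_norm_tendsto_zero]
  have h := ((tendsto_rpow_abs_mul_exp_neg_mul_sq_cocompact (by norm_num : (0 : ℝ) < 1 / 2) n
    ).mono_left atBot_le_cocompact).const_mul (Real.sqrt (2 * Real.pi))⁻¹
  rw [mul_zero] at h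
  refine h.congr fun x => ?_
  rw [norm_mul, Real.norm_of_nonneg (phi_pos x).le, Real.norm_eq_abs, abs_pow, phi,
    Real.rpow_natCast]
  ring_nf

lemma setIntegral_pos_of_continuous_of_isOpen {X : Type*} [TopologicalSpace X]
    [MeasurableSpace X] [OpensMeasurableSpace X] {μ : Measure X} [μ.IsOpenPosMeasure]
    {f : X → ℝ} {U : Set X} {x : X}
    (hf : Continuous f) (hU : IsOpen U) (hfU : IntegrableOn f U μ) (hf0 : 0 ≤ f) (hxU : x ∈ U)
    (hfx : f x ≠ 0) : 0 < ∫ y in U, f y ∂μ := by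
  rw [setIntegral_pos_iff_support_of_nonneg_ae (ae_of_all _ hf0) hfU]
  exact (hf.isOpen_support.inter hU).measure_pos μ ⟨x, hfx, hxU⟩

lemma Phi_pos (c : ℝ) : 0 < Phi c :=
  setIntegral_pos_of_continuous_of_isOpen continuous_phi isOpen_Iio integrable_phi.integrableOn
    (fun x => (phi_pos x).le) (Set.mem_Iio.2 (sub_one_lt c)) (phi_pos _).ne'

lemma hasDerivAt_Phi (x : ℝ) : HasDerivAt Phi (phi x) x := by
  have h : Phi = fun y => Phi 0 + ∫ t in (0 : ℝ)..y, phi t := by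
    ext y
    rw [Phi, Phi, ← integral_Iic_eq_integral_Iio, ← integral_Iic_eq_integral_Iio,
      ← intervalIntegral.integral_Iic_sub_Iic integrable_phi.integrableOn
        integrable_phi.integrableOn]
    ring
  rw [h]
  exact (intervalIntegral.integral_hasDerivAt_right integrable_phi.intervalIntegrable
    (continuous_phi.stronglyMeasurableAtFilter _ _) continuous_phi.continuousAt).const_add _

lemma hasDerivAt_neg_phi (x : ℝ) : HasDerivAt (fun t => -phi t) (x * phi x) x :=
  (hasDerivAt_phi x).neg.congr_deriv (by ring)

lemma integral_Iio_mul_phi (c : ℝ) : ∫ t in Set.Iio c, t * phi t = -phi c := by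
  rw [← integral_Iic_eq_integral_Iio]
  simpa using integral_Iic_of_hasDerivAt_of_tendsto' (m := 0) (fun x _ => hasDerivAt_neg_phi x)
    integrable_mul_phi.integrableOn
    (by simpa using (tendsto_pow_mul_phi_atBot 0).neg)

lemma integral_Iio_pow_add_two_mul_phi (n : ℕ) (c : ℝ) :
    ∫ t in Set.Iio c, t ^ (n + 2) * phi t
      = (n + 1) * (∫ t in Set.Iio c, t ^ n * phi t) - c ^ (n + 1) * phi c := by
  have hu : ∀ x, HasDerivAt (fun t : ℝ => t ^ (n + 1)) ((n + 1 : ℕ) * x ^ n) x := fun x =>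
    hasDerivAt_pow (n + 1) x
  have hlim : Tendsto (fun t : ℝ => t ^ (n + 1) * -phi t) atBot (nhds 0) := by
    simpa using (tendsto_pow_mul_phi_atBot (n + 1)).neg
  have h := integral_Iic_mul_deriv_eq_deriv_mul (a := c) (b' := 0) (fun x _ => hu x)
    (fun x _ => hasDerivAt_neg_phi x) ?_ ?_
    (by fun_prop : Continuous fun t : ℝ => t ^ (n + 1) * -phi t).continuousWithinAt hlim
  · have e1 : (fun t : ℝ => t ^ (n + 1) * (t * phi t)) = fun t => t ^ (n + 2) * phi t := by
      ext; ring
    have e2 : (fun t : ℝ => ((n + 1 : ℕ) : ℝ) * t ^ n * -phi t)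
        = fun t => -((n + 1) * (t ^ n * phi t)) := by
      ext; push_cast; ring
    rw [integral_Iic_eq_integral_Iio, integral_Iic_eq_integral_Iio, e1, e2, integral_neg,
      integral_const_mul] at h
    rw [h]
    ring
  · exact (integrable_pow_mul_phi (n + 2)).integrableOn.congr_fun
      (fun t _ => by simp only [Pi.mul_apply]; ring) measurableSet_Iic
  · exact ((integrable_pow_mul_phi n).const_mul (-(n + 1 : ℝ))).integrableOn.congr_fun
      (fun t _ => by simp only [Pi.mul_apply]; push_cast; ring) measurableSet_Iic

lemma sub_sq_mul_phi_eq (a t : ℝ) :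
    (t - a) ^ 2 * phi t = t ^ 2 * phi t + (-(2 * a) * (t * phi t) + a ^ 2 * phi t) := by
  ring

lemma integrable_sub_sq_mul_phi (a : ℝ) : Integrable (fun t => (t - a) ^ 2 * phi t) := by
  simp_rw [sub_sq_mul_phi_eq]
  exact (integrable_pow_mul_phi 2).add
    ((integrable_mul_phi.const_mul _).add (integrable_phi.const_mul _))

lemma integral_Iio_sub_sq_mul_phi (c a : ℝ) :
    ∫ t in Set.Iio c, (t - a) ^ 2 * phi t = (1 + a ^ 2) * Phi c + (2 * a - c) * phi c := by
  have h2 : ∫ t in Set.Iio c, t ^ 2 * phi t = Phi c - c * phi c := by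
    simpa [Phi] using integral_Iio_pow_add_two_mul_phi 0 c
  have h1 := integrable_mul_phi.integrableOn (s := Set.Iio c) |>.const_mul (-(2 * a))
  have h0 := integrable_phi.integrableOn (s := Set.Iio c) |>.const_mul (a ^ 2)
  have h10 : IntegrableOn (fun t => -(2 * a) * (t * phi t) + a ^ 2 * phi t) (Set.Iio c) :=
    h1.add h0
  simp_rw [sub_sq_mul_phi_eq]
  rw [integral_add (integrable_pow_mul_phi 2).integrableOn h10, integral_add h1 h0,
    integral_const_mul, integral_const_mul, h2, integral_Iio_mul_phi, ← Phi]
  ring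

lemma phi_eq_r_mul_Phi (b : ℝ) : phi b = r b * Phi (-b) :=
  (div_mul_cancel₀ _ (Phi_pos (-b)).ne').symm

lemma one_add_mul_r_sub_r_sq_pos (b : ℝ) : 0 < 1 + b * r b - r b ^ 2 := by
  have hx₀ : min (-b) (-r b) - 1 < -b ∧ min (-b) (-r b) - 1 < -r b :=
    ⟨by linarith [min_le_left (-b) (-r b)], by linarith [min_le_right (-b) (-r b)]⟩
  have hvar : 0 < ∫ t in Set.Iio (-b), (t - -r b) ^ 2 * phi t :=
    setIntegral_pos_of_continuous_of_isOpen (by fun_prop) isOpen_Iio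
      (integrable_sub_sq_mul_phi _).integrableOn
      (fun t => mul_nonneg (sq_nonneg _) (phi_pos t).le)
      hx₀.1 (mul_ne_zero (pow_ne_zero 2 (sub_ne_zero.2 hx₀.2.ne)) (phi_pos _).ne')
  rw [integral_Iio_sub_sq_mul_phi, phi_neg, phi_eq_r_mul_Phi] at hvar
  nlinarith [Phi_pos (-b)]

lemma hasDerivAt_F (b : ℝ) : HasDerivAt F (r b * (r b - b) - 1) b := by
  have hPhi := (hasDerivAt_Phi (-b)).comp b (hasDerivAt_neg b)
  simp only [phi_neg, mul_neg, mul_one] at hPhi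
  have h := ((hasDerivAt_phi b).div hPhi (Phi_pos (-b)).ne').sub (hasDerivAt_id b)
  refine h.congr_deriv ?_
  have := (Phi_pos (-b)).ne'
  rw [Function.comp_apply, phi_eq_r_mul_Phi]
  field_simp
  ring

lemma F_strictAnti : StrictAnti F :=
  strictAnti_of_deriv_neg fun b => by
    rw [(hasDerivAt_F b).deriv]
    linarith [one_add_mul_r_sub_r_sq_pos b]

lemma gaussianReal_eq_map_affine (m s : ℝ) :
    gaussianReal m ⟨s ^ 2, sq_nonneg s⟩ = (gaussianReal 0 1).map (fun t => s * t + m) := by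
  have hscale : (gaussianReal 0 1).map (s * ·) = gaussianReal 0 ⟨s ^ 2, sq_nonneg s⟩ := by
    rw [gaussianReal_map_const_mul, mul_zero, mul_one]
    rfl
  rw [show (fun t => s * t + m) = (· + m) ∘ (s * ·) from rfl,
    ← Measure.map_map (measurable_add_const m) (measurable_const_mul s), hscale]
  simpa using (gaussianReal_map_add_const (μ := 0) (v := ⟨s ^ 2, sq_nonneg s⟩) m).symm

lemma setIntegral_gaussianReal_zero_one (S : Set ℝ) (g : ℝ → ℝ) :
    ∫ x in S, g x ∂gaussianReal 0 1 = ∫ x in S, phi x * g x := by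
  rw [gaussianReal_of_var_ne_zero 0 one_ne_zero,
    setIntegral_withDensity_eq_setIntegral_toReal_smul₀' S
      (measurable_gaussianPDF 0 1).aemeasurable (ae_of_all _ fun _ => gaussianPDF_lt_top)]
  simp only [toReal_gaussianPDF, ← phi_eq_gaussianPDFReal, smul_eq_mul]

lemma toReal_gaussianReal_zero_one_Iio (c : ℝ) :
    (gaussianReal 0 1 (Set.Iio c)).toReal = Phi c := by
  rw [gaussianReal_apply_eq_integral 0 one_ne_zero, ← phi_eq_gaussianPDFReal]
  exact ENNReal.toReal_ofReal (Phi_pos c).le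

/-- `E_f* = E[-g | g < 0] / σ` for a limit state `g` with law `μ`. -/
noncomputable def normalizedFailureDeficit (μ : Measure ℝ) (σ : ℝ) : ℝ :=
  (∫ x in Set.Iio 0, -x ∂μ) / (σ * (μ (Set.Iio 0)).toReal)

section GaussianLimitState

variable {m s : ℝ}

lemma preimage_affine_Iio_zero (hs : 0 < s) :
    (fun t => s * t + m) ⁻¹' Set.Iio 0 = Set.Iio (-(m / s)) := by
  ext t
  rw [Set.mem_preimage, Set.mem_Iio, Set.mem_Iio, neg_div', lt_div_iff₀ hs]
  constructor <;> intro h <;> linarith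

lemma toReal_gaussianReal_Iio_zero (hs : 0 < s) :
    (gaussianReal m ⟨s ^ 2, sq_nonneg s⟩ (Set.Iio 0)).toReal = Phi (-(m / s)) := by
  rw [gaussianReal_eq_map_affine, Measure.map_apply (by fun_prop) measurableSet_Iio,
    preimage_affine_Iio_zero hs, toReal_gaussianReal_zero_one_Iio]

lemma setIntegral_Iio_zero_neg_gaussianReal (hs : 0 < s) :
    ∫ x in Set.Iio 0, -x ∂gaussianReal m ⟨s ^ 2, sq_nonneg s⟩
      = s * phi (m / s) - m * Phi (-(m / s)) := by
  rw [gaussianReal_eq_map_affine, setIntegral_map measurableSet_Iio (by fun_prop) (by fun_prop),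
    preimage_affine_Iio_zero hs, setIntegral_gaussianReal_zero_one]
  have hlin : (fun t => phi t * -(s * t + m)) = fun t => -s * (t * phi t) + -m * phi t := by
    ext t; ring
  rw [hlin, integral_add (integrable_mul_phi.integrableOn.const_mul _)
    (integrable_phi.integrableOn.const_mul _),
    integral_const_mul, integral_const_mul, integral_Iio_mul_phi, phi_neg, ← Phi]
  ring

lemma F_div_eq_normalizedFailureDeficit (hs : 0 < s) :
    F (m / s) = normalizedFailureDeficit (gaussianReal m ⟨s ^ 2, sq_nonneg s⟩) s := by
  have := (Phi_pos (-(m / s))).ne'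
  rw [normalizedFailureDeficit, setIntegral_Iio_zero_neg_gaussianReal hs,
    toReal_gaussianReal_Iio_zero hs, F]
  field_simp

end GaussianLimitState

/-- In the Gaussian case with mean `m > 0` and standard deviation `s > 0`, the unique
`b > 0` solving `F(b) = E_f*` (the normalized expected failure deficit of the Gaussian
measure) is the classical reliability index `b = m/s`. -/
theorem gaussian_severity_index_eq_classical (m s : ℝ) (hm : 0 < m) (hs : 0 < s) :
    0 < m / s ∧
      F (m / s)
        = (∫ x in Set.Iio (0 : ℝ), -x ∂(ProbabilityTheory.gaussianReal m ⟨s ^ 2, sq_nonneg s⟩)) /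
            (s * ((ProbabilityTheory.gaussianReal m ⟨s ^ 2, sq_nonneg s⟩) (Set.Iio 0)).toReal) ∧
      ∀ b : ℝ, 0 < b →
        F b
          = (∫ x in Set.Iio (0 : ℝ), -x ∂(ProbabilityTheory.gaussianReal m ⟨s ^ 2, sq_nonneg s⟩)) /
              (s * ((ProbabilityTheory.gaussianReal m ⟨s ^ 2, sq_nonneg s⟩) (Set.Iio 0)).toReal) →
        b = m / s := by
  have hF : F (m / s) = normalizedFailureDeficit _ s := F_div_eq_normalizedFailureDeficit hs
  exact ⟨div_pos hm hs, hF, fun b _ hb => F_strictAnti.injective (hb.trans hF.symm)⟩
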